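/- Let α ∈ [0,1], ρ > 0, and let a₀(n), a₁(n) be real sequences such that 2a₀(n)+a₁(n) = 1 for all n and (a₀(n)) is bounded. Then there exists a constant C > 0 such that for all n ≥ 2 and all x ∈ [0,1], |J_{n,α,ρ}^{M,1}((t−x)⁴;x)| ≤ C/n², where J_{n,α,ρ}^{M,1}((t−x)⁴;x) denotes the operator applied to the function t ↦ (t−x)⁴. -/

import Mathlib

open MeasureTheory Finset Filter

noncomputable def bin (m : ℕ) (j : ℤ) : ℝ :=
  if 0 ≤ j ∧ j ≤ (m : ℤ) then (m.choose j.toNat : ℝ) else 0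

/-- The α-Bernstein basis polynomial `p_{n,k}^α(x)` (with `k : ℤ`, vanishing out of range). -/
noncomputable def bp (α : ℝ) (n : ℕ) (k : ℤ) (x : ℝ) : ℝ :=
  if n = 1 then (if k = 0 then 1 - x else if k = 1 then x else 0)
  else
    (1 - α) * (bin (n - 2) k * x ^ k.toNat * (1 - x) ^ (n - 1 - k.toNat)
      + bin (n - 2) (k - 2) * x ^ (k.toNat - 1) * (1 - x) ^ (n - k.toNat))
    + α * bin n k * x ^ k.toNat * (1 - x) ^ (n - k.toNat)

/-- Euler Beta function. -/
noncomputable def betaFn (a b : ℝ) : ℝ := Real.Gamma a * Real.Gamma b / Real.Gamma (a + b)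

/-- The Pălțănea kernel `μ_{n,k}^ρ(t)`. -/
noncomputable def pal (ρ : ℝ) (n k : ℕ) (t : ℝ) : ℝ :=
  t ^ ((k : ℝ) * ρ) * (1 - t) ^ (((n : ℝ) - (k : ℝ)) * ρ)
    / betaFn ((k : ℝ) * ρ + 1) (((n : ℝ) - (k : ℝ)) * ρ + 1)

/-- First-order modified α-Bernstein–Pălțănea operator `J_{n,α,ρ}^{M,1}(f;x)`. -/
noncomputable def J1 (α ρ : ℝ) (a0 a1 : ℕ → ℝ) (n : ℕ) (f : ℝ → ℝ) (x : ℝ) : ℝ :=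
  ∑ k ∈ Finset.range (n + 1),
    ((a1 n * x + a0 n) * bp α (n - 1) (k : ℤ) x
      + (a1 n * (1 - x) + a0 n) * bp α (n - 1) ((k : ℤ) - 1) x)
    * ∫ t in (0:ℝ)..1, pal ρ n k t * f t

/-!
The kernel `μ_{n,k}^ρ` is the Beta density with parameters `a = kρ + 1`, `b = (n - k)ρ + 1`.
Its fourth central moment is `3ab(ab(S - 6) + 2S²) / (S⁴(S + 1)(S + 2)(S + 3)) ≤ 2/S²` with
`S = a + b = nρ + 2`, and its mean `a/S` lies within `1/S` of `k/n`, so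
`∫ μ_{n,k}^ρ(t)(t - x)⁴ dt ≤ 64(k/n - x)⁴ + 32/(ρn)²`.
For `m ≥ 2` the α-Bernstein basis of degree `m` is the convex combination
`(1 - α)((1 - x) b_{m-2,k} + x b_{m-2,k-2}) + α b_{m,k}` of classical Bernstein bases, whose fourth
moments about `mx` are `m x(1 - x)(1 + 3(m - 2)x(1 - x)) ≤ m²` (from the factorial moments), so
`∑ₖ p_{m,k}^α(x)((k + δ)/(m + 1) - x)⁴ = O(1/m²)` for `δ ∈ [0, 1]`.
Finally `a₁ = 1 - 2a₀` gives `|a(x, n)| ≤ sup |a₀| + 1`, and the shift `k ↦ k - 1` in the second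
summand of `J` only moves the grid point by `1/n`.
-/

lemma add_pow_four_le (a b : ℝ) : (a + b) ^ 4 ≤ 8 * (a ^ 4 + b ^ 4) := by
  nlinarith [sq_nonneg (a - b), sq_nonneg (a + b), sq_nonneg (a ^ 2 - b ^ 2)]

lemma pow_four_le_of_abs_le {d r : ℝ} (h : |d| ≤ r) : d ^ 4 ≤ r ^ 4 := by
  simpa only [Even.pow_abs ⟨2, rfl⟩] using pow_le_pow_left₀ (abs_nonneg d) h 4

noncomputable def bern (m k : ℕ) (x : ℝ) : ℝ := (m.choose k : ℝ) * x ^ k * (1 - x) ^ (m - k)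

lemma bern_nonneg {m k : ℕ} {x : ℝ} (hx : x ∈ Set.Icc (0:ℝ) 1) : 0 ≤ bern m k x := by
  have : 0 ≤ 1 - x := sub_nonneg.2 hx.2
  have := hx.1
  unfold bern; positivity

lemma sum_bern (m : ℕ) (x : ℝ) : ∑ k ∈ range (m + 1), bern m k x = 1 := by
  have h := add_pow x (1 - x) m
  rw [add_sub_cancel, one_pow] at h
  rw [h]
  exact Finset.sum_congr rfl fun k _ => by unfold bern; ring

lemma sum_bern_mul_descFactorial (j : ℕ) : ∀ (m : ℕ) (x : ℝ),
    ∑ k ∈ range (m + 1), bern m k x * (k.descFactorial j : ℝ)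
      = (m.descFactorial j : ℝ) * x ^ j := by
  induction j with
  | zero => intro m x; simp [sum_bern]
  | succ j ih =>
    rintro (_ | m) x
    · simp
    have hterm : ∀ i ∈ range (m + 1),
        bern (m + 1) (i + 1) x * ((i + 1).descFactorial (j + 1) : ℝ)
        = ((m : ℝ) + 1) * x * (bern m i x * (i.descFactorial j : ℝ)) := by
      intro i _
      have hc : ((m + 1 : ℕ) : ℝ) * (m.choose i : ℝ)
          = ((m + 1).choose (i + 1) : ℝ) * ((i + 1 : ℕ) : ℝ) := by
        exact_mod_cast Nat.add_one_mul_choose_eq m i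
      simp only [bern, Nat.succ_descFactorial_succ, Nat.add_sub_add_right]
      push_cast at hc ⊢
      linear_combination (-(x ^ (i + 1) * (1 - x) ^ (m - i) * (i.descFactorial j : ℝ))) * hc
    rw [Finset.sum_range_succ', Finset.sum_congr rfl hterm, ← Finset.mul_sum, ih,
      Nat.succ_descFactorial_succ, Nat.zero_descFactorial_succ]
    push_cast
    ring

lemma natCast_descFactorial_succ (a j : ℕ) :
    (a.descFactorial (j + 1) : ℝ) = a.descFactorial j * ((a : ℝ) - j) := by
  simp only [← descPochhammer_eval_eq_descFactorial, descPochhammer_succ_right,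
    Polynomial.eval_mul, Polynomial.eval_sub, Polynomial.eval_X, Polynomial.eval_natCast]

lemma sum_bern_mul_sub_pow_four (m : ℕ) (x : ℝ) :
    ∑ k ∈ range (m + 1), bern m k x * ((k : ℝ) - m * x) ^ 4
      = m * x * (1 - x) * (1 + 3 * (m - 2) * x * (1 - x)) := by
  have hpow : ∀ k : ℕ, ((k : ℝ) - m * x) ^ 4 = (k.descFactorial 4 : ℝ)
      + (6 - 4 * (m * x)) * (k.descFactorial 3 : ℝ)
      + (7 - 12 * (m * x) + 6 * (m * x) ^ 2) * (k.descFactorial 2 : ℝ)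
      + (1 - 4 * (m * x) + 6 * (m * x) ^ 2 - 4 * (m * x) ^ 3) * (k.descFactorial 1 : ℝ)
      + (m * x) ^ 4 * (k.descFactorial 0 : ℝ) := by
    intro k
    simp only [natCast_descFactorial_succ, Nat.descFactorial_zero, Nat.cast_one]
    push_cast
    ring
  simp only [hpow, mul_add, Finset.sum_add_distrib, mul_left_comm (bern m _ x), ← Finset.mul_sum,
    sum_bern_mul_descFactorial]
  simp only [natCast_descFactorial_succ, Nat.descFactorial_zero, Nat.cast_one]
  push_cast
  ring

lemma sum_bern_mul_sub_pow_four_le {m : ℕ} {x : ℝ} (hx : x ∈ Set.Icc (0:ℝ) 1) :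
    ∑ k ∈ range (m + 1), bern m k x * ((k : ℝ) - m * x) ^ 4 ≤ (m : ℝ) ^ 2 := by
  rw [sum_bern_mul_sub_pow_four]
  have hu : 0 ≤ x * (1 - x) := mul_nonneg hx.1 (sub_nonneg.2 hx.2)
  have hu4 : x * (1 - x) ≤ 1 / 4 := by nlinarith [sq_nonneg (2 * x - 1)]
  have hm : (m : ℝ) ≤ (m : ℝ) ^ 2 := by
    rcases m.eq_zero_or_pos with rfl | h
    · simp
    · nlinarith [(Nat.one_le_cast (α := ℝ)).2 h]
  have hm0 : (0 : ℝ) ≤ m := m.cast_nonneg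
  nlinarith [mul_nonneg hm0 hu, mul_nonneg (mul_nonneg hm0 hm0) (mul_nonneg hu hu),
    mul_le_mul_of_nonneg_left hu4 hm0, mul_le_mul_of_nonneg_left hu4 (mul_nonneg hm0 hm0)]

lemma sum_bern_mul_sub_add_pow_four_le {m : ℕ} {x : ℝ} (hx : x ∈ Set.Icc (0:ℝ) 1) {d r : ℝ}
    (hd : |d| ≤ r) :
    ∑ k ∈ range (m + 1), bern m k x * ((k : ℝ) - m * x + d) ^ 4 ≤ 8 * (m : ℝ) ^ 2 + 8 * r ^ 4 :=
  calc ∑ k ∈ range (m + 1), bern m k x * ((k : ℝ) - m * x + d) ^ 4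
      ≤ ∑ k ∈ range (m + 1),
          (8 * (bern m k x * ((k : ℝ) - m * x) ^ 4) + 8 * d ^ 4 * bern m k x) :=
        Finset.sum_le_sum fun k _ => by
          nlinarith [mul_le_mul_of_nonneg_left (add_pow_four_le ((k : ℝ) - m * x) d)
            (bern_nonneg (m := m) (k := k) hx)]
    _ ≤ 8 * (m : ℝ) ^ 2 + 8 * r ^ 4 := by
        rw [Finset.sum_add_distrib, ← Finset.mul_sum, ← Finset.mul_sum, sum_bern, mul_one]
        linarith [sum_bern_mul_sub_pow_four_le (m := m) hx, pow_four_le_of_abs_le hd]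

lemma bin_natCast (m k : ℕ) : bin m k = m.choose k := by
  unfold bin
  split_ifs with h
  · rw [Int.toNat_natCast]
  · rw [Nat.choose_eq_zero_of_lt (by omega), Nat.cast_zero]

lemma bin_eq_zero {m : ℕ} {j : ℤ} (hj : j < 0 ∨ (m : ℤ) < j) : bin m j = 0 :=
  if_neg fun h => by omega

lemma bin_nonneg (m : ℕ) (j : ℤ) : 0 ≤ bin m j := by
  unfold bin; split <;> positivity

section AlphaBernstein

variable {α x : ℝ}

lemma bp_nonneg (hα : α ∈ Set.Icc (0:ℝ) 1) (hx : x ∈ Set.Icc (0:ℝ) 1) (m : ℕ) (k : ℤ) :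
    0 ≤ bp α m k x := by
  obtain ⟨hα0, hα1⟩ := hα
  obtain ⟨hx0, hx1⟩ := hx
  have : 0 ≤ 1 - x := by linarith
  have : 0 ≤ 1 - α := by linarith
  have := bin_nonneg (m - 2) k
  have := bin_nonneg (m - 2) (k - 2)
  have := bin_nonneg m k
  unfold bp
  split_ifs <;> positivity

lemma bp_neg_one (m : ℕ) : bp α m (-1) x = 0 := by
  unfold bp
  split
  · norm_num
  · rw [bin_eq_zero (by omega), bin_eq_zero (by omega), bin_eq_zero (by omega)]
    ring

lemma bp_succ_self (m : ℕ) : bp α m (m + 1) x = 0 := by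
  unfold bp
  split
  · subst m; norm_num
  · rw [bin_eq_zero (by omega), bin_eq_zero (by omega), bin_eq_zero (by omega)]
    ring

lemma sum_bp_add_two_mul (m : ℕ) (f : ℕ → ℝ) :
    ∑ k ∈ range (m + 3), bp α (m + 2) k x * f k
      = (1 - α) * ((1 - x) * ∑ j ∈ range (m + 1), bern m j x * f j
          + x * ∑ j ∈ range (m + 1), bern m j x * f (j + 2))
        + α * ∑ k ∈ range (m + 3), bern (m + 2) k x * f k := by
  have hbp : ∀ k : ℕ, bp α (m + 2) k x * f k
      = (1 - α) * (bin m k * x ^ k * (1 - x) ^ (m + 1 - k) * f k)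
        + (1 - α) * (bin m (k - 2) * x ^ (k - 1) * (1 - x) ^ (m + 2 - k) * f k)
        + α * (bern (m + 2) k x * f k) := by
    intro k
    simp only [bp, bern, bin_natCast, Int.toNat_natCast, Nat.add_sub_cancel,
      show m + 2 - 1 = m + 1 by omega, show m + 2 ≠ 1 by omega, if_false]
    ring
  have hlow : ∑ k ∈ range (m + 3), bin m k * x ^ k * (1 - x) ^ (m + 1 - k) * f k
      = (1 - x) * ∑ j ∈ range (m + 1), bern m j x * f j := by
    rw [sum_range_succ, sum_range_succ, bin_eq_zero (by omega), bin_eq_zero (by omega),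
      mul_sum]
    simp only [zero_mul, add_zero]
    refine sum_congr rfl fun j hj => ?_
    rw [bin_natCast, bern, show m + 1 - j = m - j + 1 by grind, pow_succ]
    ring
  have hhigh : ∑ k ∈ range (m + 3), bin m (k - 2) * x ^ (k - 1) * (1 - x) ^ (m + 2 - k) * f k
      = x * ∑ j ∈ range (m + 1), bern m j x * f (j + 2) := by
    rw [sum_range_succ', sum_range_succ', bin_eq_zero (by omega), bin_eq_zero (by omega),
      mul_sum]
    simp only [zero_mul, add_zero]
    refine sum_congr rfl fun j _ => ?_
    rw [show ((j + 1 + 1 : ℕ) : ℤ) - 2 = j by push_cast; ring, bin_natCast, bern,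
      show m + 2 - (j + 1 + 1) = m - j by omega, show j + 1 + 1 - 1 = j + 1 by omega, pow_succ]
    ring
  rw [sum_congr rfl fun k _ => hbp k, sum_add_distrib, sum_add_distrib, ← mul_sum, ← mul_sum,
    ← mul_sum, hlow, hhigh]
  ring

lemma bp_one (k : ℕ) (hk : k ≤ 1) : bp α 1 k x = bern 1 k x := by
  interval_cases k <;> simp [bp, bern]

lemma sum_bp {m : ℕ} (hm : 1 ≤ m) : ∑ k ∈ range (m + 1), bp α m k x = 1 := by
  obtain rfl | ⟨m, rfl⟩ : m = 1 ∨ ∃ m', m = m' + 2 := by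
    rcases m with _ | _ | m <;> simp_all
  · rw [← sum_bern 1 x]
    exact sum_congr rfl fun k hk => bp_one k (by simpa [Nat.lt_succ_iff] using hk)
  · simpa [sum_bern] using sum_bp_add_two_mul (α := α) (x := x) m (fun _ => 1)

lemma sum_bp_mul_sub_add_pow_four_le (hα : α ∈ Set.Icc (0:ℝ) 1) (hx : x ∈ Set.Icc (0:ℝ) 1)
    {m : ℕ} (hm : 1 ≤ m) {c : ℝ} (hc : |c| ≤ 1) :
    ∑ k ∈ range (m + 1), bp α m k x * ((k : ℝ) - m * x + c) ^ 4 ≤ 170 * (m : ℝ) ^ 2 := by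
  obtain ⟨hc0, hc1⟩ := abs_le.1 hc
  obtain rfl | ⟨m, rfl⟩ : m = 1 ∨ ∃ m', m = m' + 2 := by
    rcases m with _ | _ | m <;> simp_all
  · rw [sum_congr rfl fun k hk => by rw [bp_one k (by simpa [Nat.lt_succ_iff] using hk)]]
    have := sum_bern_mul_sub_add_pow_four_le hx hc (m := 1)
    norm_num at this ⊢
    linarith
  obtain ⟨hx0, hx1⟩ := hx
  set B : ℝ := 170 * ((m + 2 : ℕ) : ℝ) ^ 2
  have hB : ∀ m' ≤ m + 2, 8 * (m' : ℝ) ^ 2 + 8 * 3 ^ 4 ≤ B := fun m' hm' => by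
    have : (m' : ℝ) ≤ m + 2 := by exact_mod_cast hm'
    have := m'.cast_nonneg (α := ℝ)
    push_cast [B]
    nlinarith
  have hP : ∑ j ∈ range (m + 1), bern m j x * ((j : ℝ) - ((m + 2 : ℕ) : ℝ) * x + c) ^ 4 ≤ B :=
    calc _ = ∑ j ∈ range (m + 1), bern m j x * ((j : ℝ) - m * x + (c - 2 * x)) ^ 4 :=
          sum_congr rfl fun j _ => by push_cast; ring
      _ ≤ B := (sum_bern_mul_sub_add_pow_four_le ⟨hx0, hx1⟩
          (abs_le.2 ⟨by linarith, by linarith⟩)).trans (hB m (by omega))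
  have hQ : ∑ j ∈ range (m + 1),
      bern m j x * (((j + 2 : ℕ) : ℝ) - ((m + 2 : ℕ) : ℝ) * x + c) ^ 4 ≤ B :=
    calc _ = ∑ j ∈ range (m + 1), bern m j x * ((j : ℝ) - m * x + (2 + c - 2 * x)) ^ 4 :=
          sum_congr rfl fun j _ => by push_cast; ring
      _ ≤ B := (sum_bern_mul_sub_add_pow_four_le ⟨hx0, hx1⟩
          (abs_le.2 ⟨by linarith, by linarith⟩)).trans (hB m (by omega))
  have hR : ∑ k ∈ range (m + 3),
      bern (m + 2) k x * ((k : ℝ) - ((m + 2 : ℕ) : ℝ) * x + c) ^ 4 ≤ B :=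
    (sum_bern_mul_sub_add_pow_four_le ⟨hx0, hx1⟩
      (abs_le.2 ⟨by linarith, by linarith⟩)).trans (hB (m + 2) le_rfl)
  rw [sum_bp_add_two_mul m fun k => ((k : ℝ) - ((m + 2 : ℕ) : ℝ) * x + c) ^ 4]
  obtain ⟨hα0, hα1⟩ := hα
  nlinarith [mul_le_mul_of_nonneg_left hP (sub_nonneg.2 hx1), mul_le_mul_of_nonneg_left hQ hx0,
    mul_le_mul_of_nonneg_left hR hα0, mul_nonneg (sub_nonneg.2 hα1) (sub_nonneg.2 hx1),
    mul_nonneg (sub_nonneg.2 hα1) hx0]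

lemma sum_bp_add_bp_sub_one_mul (m : ℕ) (g : ℕ → ℝ) :
    ∑ k ∈ range (m + 2), (bp α m k x + bp α m (k - 1) x) * g k
      = ∑ k ∈ range (m + 1), bp α m k x * (g k + g (k + 1)) := by
  simp only [add_mul, mul_add, sum_add_distrib]
  rw [sum_range_succ, sum_range_succ' (fun k => bp α m ((k : ℤ) - 1) x * g k)]
  simp [bp_succ_self, bp_neg_one]

lemma sum_bp_mul_add_div_sub_pow_four_le (hα : α ∈ Set.Icc (0:ℝ) 1)
    (hx : x ∈ Set.Icc (0:ℝ) 1) {m : ℕ} (hm : 1 ≤ m) {δ : ℝ}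
    (hδ : δ ∈ Set.Icc (0:ℝ) 1) :
    ∑ k ∈ range (m + 1), bp α m k x * (((k : ℝ) + δ) / (m + 1) - x) ^ 4
      ≤ 170 / ((m : ℝ) + 1) ^ 2 := by
  have hm0 : (0 : ℝ) < m + 1 := by positivity
  have hterm : ∀ k : ℕ, (((k : ℝ) + δ) / (m + 1) - x) ^ 4
      = ((k : ℝ) - m * x + (δ - x)) ^ 4 / ((m : ℝ) + 1) ^ 4 := fun k => by
    rw [← div_pow]; congr 1; field_simp; ring
  simp only [hterm, mul_div_assoc', ← sum_div]
  have hc : |δ - x| ≤ 1 := abs_le.2 ⟨by linarith [hx.2, hδ.1], by linarith [hx.1, hδ.2]⟩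
  rw [div_le_div_iff₀ (by positivity) (by positivity)]
  have hmm : (m : ℝ) ^ 2 ≤ ((m : ℝ) + 1) ^ 2 := by nlinarith [m.cast_nonneg (α := ℝ)]
  calc _ ≤ 170 * (m : ℝ) ^ 2 * ((m : ℝ) + 1) ^ 2 := by
        gcongr; exact sum_bp_mul_sub_add_pow_four_le hα hx hm hc
    _ ≤ 170 * ((m : ℝ) + 1) ^ 4 := by nlinarith [sq_nonneg ((m : ℝ) + 1)]

end AlphaBernstein

noncomputable def betaDensity (a b t : ℝ) : ℝ := t ^ (a - 1) * (1 - t) ^ (b - 1) / betaFn a b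

section Beta

variable {a b : ℝ}

lemma betaFn_pos (ha : 0 < a) (hb : 0 < b) : 0 < betaFn a b := by
  unfold betaFn
  have := Real.Gamma_pos_of_pos ha
  have := Real.Gamma_pos_of_pos hb
  have := Real.Gamma_pos_of_pos (add_pos ha hb)
  positivity

lemma betaFn_add_one (ha : 0 < a) (hb : 0 < b) : betaFn (a + 1) b = a / (a + b) * betaFn a b := by
  unfold betaFn
  rw [Real.Gamma_add_one ha.ne', add_right_comm, Real.Gamma_add_one (add_pos ha hb).ne']
  have := (Real.Gamma_pos_of_pos (add_pos ha hb)).ne'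
  field_simp

lemma betaFn_add_natCast (ha : 0 < a) (hb : 0 < b) (j : ℕ) :
    betaFn (a + j) b = (∏ i ∈ range j, (a + i) / (a + b + i)) * betaFn a b := by
  induction j with
  | zero => simp
  | succ j ih =>
    rw [Nat.cast_succ, ← add_assoc, betaFn_add_one (by positivity) hb, ih, prod_range_succ]
    ring

lemma integral_rpow_mul_one_sub_rpow (ha : 0 < a) (hb : 0 < b) :
    ∫ t in (0:ℝ)..1, t ^ (a - 1) * (1 - t) ^ (b - 1) = betaFn a b := by
  have key := Complex.Gamma_mul_Gamma_eq_betaIntegral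
    (s := (a : ℂ)) (t := (b : ℂ)) (by simpa using ha) (by simpa using hb)
  have hre : Complex.betaIntegral a b
      = ((∫ t in (0:ℝ)..1, t ^ (a - 1) * (1 - t) ^ (b - 1) : ℝ) : ℂ) := by
    rw [Complex.betaIntegral, ← intervalIntegral.integral_ofReal]
    refine intervalIntegral.integral_congr fun t ht => ?_
    rw [Set.uIcc_of_le zero_le_one] at ht
    push_cast
    rw [Complex.ofReal_cpow ht.1, Complex.ofReal_cpow (sub_nonneg.2 ht.2)]
    push_cast
    ring
  rw [hre, ← Complex.ofReal_add, Complex.Gamma_ofReal, Complex.Gamma_ofReal,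
    Complex.Gamma_ofReal, ← Complex.ofReal_mul, ← Complex.ofReal_mul] at key
  have hG := (Real.Gamma_pos_of_pos (add_pos ha hb)).ne'
  unfold betaFn
  rw [eq_div_iff hG, mul_comm]
  exact_mod_cast key.symm

lemma betaDensity_nonneg (ha : 0 < a) (hb : 0 < b) {t : ℝ} (ht : t ∈ Set.Icc (0:ℝ) 1) :
    0 ≤ betaDensity a b t := by
  have := Real.rpow_nonneg ht.1 (a - 1)
  have := Real.rpow_nonneg (sub_nonneg.2 ht.2) (b - 1)
  have := betaFn_pos ha hb
  unfold betaDensity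
  positivity

lemma integral_betaDensity_mul_pow (ha : 0 < a) (hb : 0 < b) (j : ℕ) :
    ∫ t in (0:ℝ)..1, betaDensity a b t * t ^ j = ∏ i ∈ range j, (a + i) / (a + b + i) := by
  have hβ := betaFn_pos ha hb
  calc ∫ t in (0:ℝ)..1, betaDensity a b t * t ^ j
      = ∫ t in (0:ℝ)..1, t ^ (a + j - 1) * (1 - t) ^ (b - 1) / betaFn a b := by
        refine intervalIntegral.integral_congr_ae (ae_of_all _ fun t ht => ?_)
        rw [Set.uIoc_of_le zero_le_one] at ht
        rw [betaDensity, add_sub_right_comm, Real.rpow_add ht.1, Real.rpow_natCast]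
        ring
    _ = ∏ i ∈ range j, (a + i) / (a + b + i) := by
        rw [intervalIntegral.integral_div, integral_rpow_mul_one_sub_rpow (by positivity) hb,
          betaFn_add_natCast ha hb, mul_div_assoc, div_self hβ.ne', mul_one]

lemma integral_betaDensity (ha : 0 < a) (hb : 0 < b) :
    ∫ t in (0:ℝ)..1, betaDensity a b t = 1 := by
  simpa using integral_betaDensity_mul_pow ha hb 0

lemma intervalIntegrable_betaDensity (ha : 0 < a) (hb : 0 < b) :
    IntervalIntegrable (betaDensity a b) volume 0 1 :=
  intervalIntegral.intervalIntegrable_of_integral_ne_zero <| by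
    rw [integral_betaDensity ha hb]; exact one_ne_zero

lemma intervalIntegrable_betaDensity_mul (ha : 0 < a) (hb : 0 < b) {g : ℝ → ℝ}
    (hg : Continuous g) : IntervalIntegrable (fun t => betaDensity a b t * g t) volume 0 1 :=
  (intervalIntegrable_betaDensity ha hb).mul_continuousOn hg.continuousOn

lemma integral_betaDensity_mul_sub_pow (ha : 0 < a) (hb : 0 < b) (y : ℝ) (N : ℕ) :
    ∫ t in (0:ℝ)..1, betaDensity a b t * (t - y) ^ N
      = ∑ j ∈ range (N + 1),
          (∏ i ∈ range j, (a + i) / (a + b + i)) * (-y) ^ (N - j) * N.choose j := by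
  simp_rw [sub_eq_add_neg _ y, add_pow, mul_sum]
  rw [intervalIntegral.integral_finsetSum fun j _ =>
    intervalIntegrable_betaDensity_mul ha hb (by fun_prop)]
  refine sum_congr rfl fun j _ => ?_
  rw [← integral_betaDensity_mul_pow ha hb j, ← intervalIntegral.integral_mul_const,
    ← intervalIntegral.integral_mul_const]
  congr 1 with t
  ring

lemma integral_betaDensity_mul_sub_mean_pow_four (ha : 0 < a) (hb : 0 < b) :
    ∫ t in (0:ℝ)..1, betaDensity a b t * (t - a / (a + b)) ^ 4
      = 3 * a * b * (a * b * (a + b - 6) + 2 * (a + b) ^ 2)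
        / ((a + b) ^ 4 * (a + b + 1) * (a + b + 2) * (a + b + 3)) := by
  rw [integral_betaDensity_mul_sub_pow ha hb]
  simp only [sum_range_succ, sum_range_zero, prod_range_succ, prod_range_zero, Nat.choose_succ_succ,
    Nat.choose_zero_right, Nat.choose_zero_succ, Nat.choose_self]
  push_cast
  have : a + b ≠ 0 := by positivity
  field_simp
  ring

lemma integral_betaDensity_mul_sub_mean_pow_four_le (ha : 0 < a) (hb : 0 < b) :
    ∫ t in (0:ℝ)..1, betaDensity a b t * (t - a / (a + b)) ^ 4 ≤ 2 / (a + b) ^ 2 := by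
  rw [integral_betaDensity_mul_sub_mean_pow_four ha hb,
    div_le_div_iff₀ (by positivity) (by positivity)]
  set S := a + b
  have hS : 0 < S := by positivity
  have hab : 0 < a * b := mul_pos ha hb
  have hab4 : a * b ≤ S ^ 2 / 4 := by nlinarith [sq_nonneg (a - b)]
  have h1 : a * b * (S - 6) + 2 * S ^ 2 ≤ S ^ 3 / 4 + 2 * S ^ 2 := by nlinarith
  have h2 : 3 * (a * b) * (a * b * (S - 6) + 2 * S ^ 2)
      ≤ 3 * (S ^ 2 / 4) * (S ^ 3 / 4 + 2 * S ^ 2) :=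
    mul_le_mul (by linarith) h1 (by nlinarith) (by positivity)
  have h3 : 3 * (S ^ 2 / 4) * (S ^ 3 / 4 + 2 * S ^ 2) * S ^ 2
      ≤ 2 * (S ^ 4 * (S + 1) * (S + 2) * (S + 3)) := by
    nlinarith [pow_pos hS 4, pow_pos hS 5, pow_pos hS 6]
  nlinarith [mul_le_mul_of_nonneg_right h2 (sq_nonneg S)]

lemma integral_betaDensity_mul_sub_pow_four_le (ha : 0 < a) (hb : 0 < b) (y : ℝ) :
    ∫ t in (0:ℝ)..1, betaDensity a b t * (t - y) ^ 4
      ≤ 16 / (a + b) ^ 2 + 8 * (a / (a + b) - y) ^ 4 := by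
  set μ := a / (a + b)
  calc ∫ t in (0:ℝ)..1, betaDensity a b t * (t - y) ^ 4
      ≤ ∫ t in (0:ℝ)..1,
          (8 * (betaDensity a b t * (t - μ) ^ 4) + 8 * (μ - y) ^ 4 * betaDensity a b t) := by
        refine intervalIntegral.integral_mono_on zero_le_one
          (intervalIntegrable_betaDensity_mul ha hb (by fun_prop))
          (((intervalIntegrable_betaDensity_mul ha hb (by fun_prop)).const_mul 8).add
            ((intervalIntegrable_betaDensity ha hb).const_mul _)) fun t ht => ?_
        have h := mul_le_mul_of_nonneg_left (add_pow_four_le (t - μ) (μ - y))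
          (betaDensity_nonneg ha hb ht)
        rw [sub_add_sub_cancel] at h
        linarith
    _ = 8 * (∫ t in (0:ℝ)..1, betaDensity a b t * (t - μ) ^ 4) + 8 * (μ - y) ^ 4 := by
        rw [intervalIntegral.integral_add
          ((intervalIntegrable_betaDensity_mul ha hb (by fun_prop)).const_mul 8)
          ((intervalIntegrable_betaDensity ha hb).const_mul _), intervalIntegral.integral_const_mul,
          intervalIntegral.integral_const_mul, integral_betaDensity ha hb, mul_one]
    _ ≤ 8 * (2 / (a + b) ^ 2) + 8 * (μ - y) ^ 4 := by
        gcongr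
        exact integral_betaDensity_mul_sub_mean_pow_four_le ha hb
    _ = 16 / (a + b) ^ 2 + 8 * (μ - y) ^ 4 := by ring

end Beta

lemma pal_eq_betaDensity (ρ : ℝ) (n k : ℕ) :
    pal ρ n k = betaDensity (k * ρ + 1) ((n - k) * ρ + 1) := by
  ext t
  simp only [pal, betaDensity, add_sub_cancel_right]

lemma integral_pal_mul_sub_pow_four_nonneg {ρ : ℝ} (hρ : 0 < ρ) {n k : ℕ} (hk : k ≤ n)
    (x : ℝ) :
    0 ≤ ∫ t in (0:ℝ)..1, pal ρ n k t * (t - x) ^ 4 := by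
  have : (k : ℝ) ≤ n := by exact_mod_cast hk
  refine intervalIntegral.integral_nonneg zero_le_one fun t ht => ?_
  rw [pal_eq_betaDensity]
  exact mul_nonneg (betaDensity_nonneg (by positivity) (by nlinarith) ht) (by positivity)

lemma integral_pal_mul_sub_pow_four_le {ρ : ℝ} (hρ : 0 < ρ) {n k : ℕ} (hk : k ≤ n) (hn : 0 < n)
    (x : ℝ) :
    ∫ t in (0:ℝ)..1, pal ρ n k t * (t - x) ^ 4
      ≤ 64 * ((k : ℝ) / n - x) ^ 4 + 32 / (ρ * n) ^ 2 := by
  have hkn : (k : ℝ) ≤ n := by exact_mod_cast hk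
  have hn0 : (0 : ℝ) < n := by exact_mod_cast hn
  have hβ := integral_betaDensity_mul_sub_pow_four_le (a := k * ρ + 1) (b := (n - k) * ρ + 1)
    (by positivity) (by nlinarith) x
  rw [pal_eq_betaDensity]
  set S := (k * ρ + 1) + ((n - k) * ρ + 1) with hS_def
  have hS : S = ρ * n + 2 := by rw [hS_def]; ring
  have hSpos : 0 < S := by rw [hS]; positivity
  have hmean : |(k * ρ + 1) / S - k / n| ≤ 1 / S := by
    have h : (k * ρ + 1) / S - k / n = ((n - 2 * k) / n) / S := by
      rw [hS]; field_simp; ring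
    rw [h, abs_div, abs_of_pos hSpos]
    gcongr
    rw [abs_div, abs_of_pos hn0, div_le_one hn0, abs_le]
    constructor <;> linarith [k.cast_nonneg (α := ℝ)]
  have hdev : ((k * ρ + 1) / S - x) ^ 4 ≤ 8 * ((k : ℝ) / n - x) ^ 4 + 8 * (1 / S) ^ 4 := by
    have h := add_pow_four_le ((k : ℝ) / n - x) ((k * ρ + 1) / S - k / n)
    rw [add_comm, sub_add_sub_cancel] at h
    linarith [pow_four_le_of_abs_le hmean]
  have hsmall : 16 / S ^ 2 + 8 * (8 * (1 / S) ^ 4) ≤ 32 / (ρ * n) ^ 2 := by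
    have hρn : 0 < ρ * n := by positivity
    rw [hS, div_pow, one_pow, show 16 / (ρ * n + 2) ^ 2 + 8 * (8 * (1 / (ρ * n + 2) ^ 4))
      = (16 * (ρ * n + 2) ^ 2 + 64) / (ρ * n + 2) ^ 4 by field_simp; ring,
      div_le_div_iff₀ (by positivity) (by positivity)]
    nlinarith [pow_pos hρn 2, pow_pos hρn 3, pow_pos hρn 4]
  linarith

lemma sum_bp_mul_integral_pal_add_succ_le {α ρ x : ℝ} (hα : α ∈ Set.Icc (0:ℝ) 1)
    (hρ : 0 < ρ) (hx : x ∈ Set.Icc (0:ℝ) 1) {m : ℕ} (hm : 1 ≤ m) :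
    ∑ k ∈ range (m + 1), bp α m k x * ((∫ t in (0:ℝ)..1, pal ρ (m + 1) k t * (t - x) ^ 4)
        + ∫ t in (0:ℝ)..1, pal ρ (m + 1) (k + 1) t * (t - x) ^ 4)
      ≤ 21760 / ((m : ℝ) + 1) ^ 2 + 64 / (ρ * ((m : ℝ) + 1)) ^ 2 := by
  set E : ℝ := 32 / (ρ * ((m : ℝ) + 1)) ^ 2
  have hI : ∀ k ≤ m + 1, ∫ t in (0:ℝ)..1, pal ρ (m + 1) k t * (t - x) ^ 4
      ≤ 64 * ((k : ℝ) / ((m : ℝ) + 1) - x) ^ 4 + E := fun k hk => by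
    simpa using integral_pal_mul_sub_pow_four_le hρ hk m.succ_pos x
  calc _ ≤ ∑ k ∈ range (m + 1),
          bp α m k x * (64 * ((k : ℝ) / ((m : ℝ) + 1) - x) ^ 4
          + 64 * (((k : ℝ) + 1) / ((m : ℝ) + 1) - x) ^ 4 + 2 * E) := by
        refine sum_le_sum fun k hk => mul_le_mul_of_nonneg_left ?_ (bp_nonneg hα hx m k)
        have hk : k ≤ m := Nat.lt_succ_iff.1 (mem_range.1 hk)
        have := hI (k + 1) (by omega)
        push_cast at this
        linarith [hI k (by omega)]
    _ = 64 * ∑ k ∈ range (m + 1), bp α m k x * ((k : ℝ) / ((m : ℝ) + 1) - x) ^ 4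
          + 64 * ∑ k ∈ range (m + 1), bp α m k x * (((k : ℝ) + 1) / ((m : ℝ) + 1) - x) ^ 4
          + 2 * E * ∑ k ∈ range (m + 1), bp α m k x := by
        simp only [mul_sum, ← sum_add_distrib]
        exact sum_congr rfl fun k _ => by ring
    _ ≤ 64 * (170 / ((m : ℝ) + 1) ^ 2) + 64 * (170 / ((m : ℝ) + 1) ^ 2) + 2 * E * 1 := by
        rw [sum_bp hm]
        gcongr
        · simpa using sum_bp_mul_add_div_sub_pow_four_le hα hx hm (δ := 0) (by norm_num)
        · exact sum_bp_mul_add_div_sub_pow_four_le hα hx hm (by norm_num)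
    _ = 21760 / ((m : ℝ) + 1) ^ 2 + 64 / (ρ * ((m : ℝ) + 1)) ^ 2 := by ring

lemma abs_J1_le {α ρ x A : ℝ} (hα : α ∈ Set.Icc (0:ℝ) 1) (hx : x ∈ Set.Icc (0:ℝ) 1)
    {a0 a1 : ℕ → ℝ} {m : ℕ} {f : ℝ → ℝ}
    (hf : ∀ k ≤ m + 1, 0 ≤ ∫ t in (0:ℝ)..1, pal ρ (m + 1) k t * f t)
    (h0 : |a1 (m + 1) * x + a0 (m + 1)| ≤ A) (h1 : |a1 (m + 1) * (1 - x) + a0 (m + 1)| ≤ A) :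
    |J1 α ρ a0 a1 (m + 1) f x| ≤ A * ∑ k ∈ range (m + 1), bp α m k x
      * ((∫ t in (0:ℝ)..1, pal ρ (m + 1) k t * f t)
        + ∫ t in (0:ℝ)..1, pal ρ (m + 1) (k + 1) t * f t) := by
  set I : ℕ → ℝ := fun k => ∫ t in (0:ℝ)..1, pal ρ (m + 1) k t * f t
  unfold J1
  rw [Nat.add_sub_cancel]
  calc _ ≤ ∑ k ∈ range (m + 2), (bp α m k x + bp α m (k - 1) x) * (A * I k) := by
        refine (abs_sum_le_sum_abs _ _).trans (sum_le_sum fun k hk => ?_)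
        have hI := hf k (Nat.lt_succ_iff.1 (mem_range.1 hk))
        have hp := bp_nonneg hα hx m k
        have hq := bp_nonneg hα hx m (k - 1)
        have hc : |(a1 (m + 1) * x + a0 (m + 1)) * bp α m k x
            + (a1 (m + 1) * (1 - x) + a0 (m + 1)) * bp α m (k - 1) x|
            ≤ A * bp α m k x + A * bp α m (k - 1) x := by
          refine (abs_add_le _ _).trans ?_
          rw [abs_mul, abs_mul, abs_of_nonneg hp, abs_of_nonneg hq]
          nlinarith [mul_le_mul_of_nonneg_right h0 hp, mul_le_mul_of_nonneg_right h1 hq]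
        rw [abs_mul, abs_of_nonneg hI]
        nlinarith [mul_le_mul_of_nonneg_right hc hI]
    _ = A * ∑ k ∈ range (m + 1), bp α m k x * (I k + I (k + 1)) := by
        rw [sum_bp_add_bp_sub_one_mul m fun k => A * I k, mul_sum]
        exact sum_congr rfl fun k _ => by ring

lemma abs_mul_add_le_of_two_mul_add_eq_one {a0 a1 y M : ℝ} (h : 2 * a0 + a1 = 1) (hM : |a0| ≤ M)
    (hy : y ∈ Set.Icc (0:ℝ) 1) : |a1 * y + a0| ≤ M + 1 := by
  have h2y : |1 - 2 * y| ≤ 1 := abs_le.2 ⟨by linarith [hy.2], by linarith [hy.1]⟩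
  calc |a1 * y + a0| = |y + a0 * (1 - 2 * y)| := by congr 1; linear_combination y * h
    _ ≤ |y| + |a0| * |1 - 2 * y| := by rw [← abs_mul]; exact abs_add_le _ _
    _ ≤ 1 + M * 1 := by
        have := (abs_nonneg a0).trans hM
        gcongr
        exact abs_le.2 ⟨by linarith [hy.1], hy.2⟩
    _ = M + 1 := by ring

theorem stmt_3 (α ρ : ℝ) (hα : α ∈ Set.Icc (0:ℝ) 1) (hρ : 0 < ρ)
    (a0 a1 : ℕ → ℝ) (hsum : ∀ n, 2 * a0 n + a1 n = 1)
    (hbdd : ∃ M : ℝ, ∀ n, |a0 n| ≤ M) :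
    ∃ C > (0:ℝ), ∀ n : ℕ, 2 ≤ n → ∀ x ∈ Set.Icc (0:ℝ) 1,
      |J1 α ρ a0 a1 n (fun t => (t - x) ^ 4) x| ≤ C / (n : ℝ) ^ 2 := by
  obtain ⟨M, hM⟩ := hbdd
  have hM0 : 0 ≤ M := (abs_nonneg _).trans (hM 0)
  refine ⟨(M + 1) * (21760 + 64 / ρ ^ 2), by positivity, fun n hn x hx => ?_⟩
  obtain ⟨m, rfl⟩ : ∃ m, n = m + 1 := ⟨n - 1, by omega⟩
  have hx' : 1 - x ∈ Set.Icc (0:ℝ) 1 := ⟨by linarith [hx.2], by linarith [hx.1]⟩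
  calc _ ≤ (M + 1) * ∑ k ∈ range (m + 1), bp α m k x
        * ((∫ t in (0:ℝ)..1, pal ρ (m + 1) k t * (t - x) ^ 4)
          + ∫ t in (0:ℝ)..1, pal ρ (m + 1) (k + 1) t * (t - x) ^ 4) :=
        abs_J1_le hα hx (fun _ hk => integral_pal_mul_sub_pow_four_nonneg hρ hk x)
          (abs_mul_add_le_of_two_mul_add_eq_one (hsum _) (hM _) hx)
          (abs_mul_add_le_of_two_mul_add_eq_one (hsum _) (hM _) hx')
    _ ≤ (M + 1) * (21760 / ((m : ℝ) + 1) ^ 2 + 64 / (ρ * ((m : ℝ) + 1)) ^ 2) := by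
        gcongr
        exact sum_bp_mul_integral_pal_add_succ_le hα hρ hx (by omega)
    _ = (M + 1) * (21760 + 64 / ρ ^ 2) / ((m + 1 : ℕ) : ℝ) ^ 2 := by
        push_cast
        field_simp
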